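/- There exists an approval profile and committee that is Lindahl priceable but not priceable: with n = 5 voters, k = 2, candidates {a,b,d}, approval sets A_1 = {a} and A_i = {b,d} for i ∈ {2,3,4,5}, the committee W = {a,b} is Lindahl priceable (witnessed by prices p[i,b] = 0.6 and p[i,d] = 0.5 for i ≠ 1, zero otherwise) but not priceable in the sense of Peters–Skowron. -/

import Mathlib

/-!
Lindahl priceability holds because the `b, d` voters value the pair `{b, d}` at more than their
whole budget, while each of `b` and `d` alone costs them just `3/5` and `1/2`.

Priceability fails by a counting argument. Only voter `1` approves `a`, so the common price `r`
is at most one budget. The four `{b, d}` voters spend at most `|W| · r = 2r` together on `W`,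
so they keep at least `4 - 2r` unspent, all of it available for the unelected `d`;
condition (5) then forces `4 - 2r ≤ r`, i.e. `r ≥ 4/3 > 1`.
-/

/-- The profile of Proposition `lindnotpble`: 5 voters over candidates
`{a, b, d} = {0, 1, 2}`, with `A_1 = {a}` and `A_i = {b, d}` for `i ≠ 1`. -/
def P13 : Fin 5 → Finset (Fin 3) := fun i => if i = 0 then {0} else {1, 2}

open Finset

section Payments

variable {V C R : Type*} [Fintype V] [CommRing R] [PartialOrder R] [IsOrderedRing R]

theorem sum_payments_le_card_supporters [DecidableEq C] (A : V → Finset C) (f : V → C → R)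
    (c : C) (hnonneg : ∀ i, 0 ≤ f i c) (hle : ∀ i, f i c ≤ 1)
    (hsupp : ∀ i, 0 < f i c → c ∈ A i) :
    ∑ i, f i c ≤ #(univ.filter fun i => c ∈ A i) := by
  have hzero : ∀ i ∈ univ, i ∉ univ.filter (fun i => c ∈ A i) → f i c = 0 := fun i _ hi =>
    (hnonneg i).eq_of_not_lt' fun hpos => hi (mem_filter.2 ⟨mem_univ i, hsupp i hpos⟩)
  rw [← sum_subset (filter_subset _ _) hzero]
  simpa using sum_le_sum fun i (_ : i ∈ univ.filter fun i => c ∈ A i) => hle i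

theorem card_sub_card_mul_le_sum_leftover (f : V → C → R) (W : Finset C) (r : R)
    (hnonneg : ∀ i c, 0 ≤ f i c) (hprice : ∀ c ∈ W, ∑ i, f i c = r) (N : Finset V) :
    #N - #W * r ≤ ∑ i ∈ N, (1 - ∑ c ∈ W, f i c) := by
  have hspent : ∑ i ∈ N, ∑ c ∈ W, f i c ≤ #W * r := calc
    ∑ i ∈ N, ∑ c ∈ W, f i c ≤ ∑ i, ∑ c ∈ W, f i c :=
      sum_le_sum_of_subset_of_nonneg (subset_univ N) fun i _ _ => sum_nonneg fun c _ => hnonneg i c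
    _ = ∑ c ∈ W, ∑ i, f i c := sum_comm
    _ = #W * r := by rw [sum_congr rfl hprice, sum_const, nsmul_eq_mul]
  rw [sum_sub_distrib, sum_const, nsmul_one]
  exact sub_le_sub_left hspent _

end Payments

def lindahlPrices13 (i : Fin 5) (c : Fin 3) : ℚ :=
  if i = 0 then 0 else if c = 1 then 3 / 5 else if c = 2 then 1 / 2 else 0

theorem lindahlPrices13_nonneg (i : Fin 5) (c : Fin 3) : 0 ≤ lindahlPrices13 i c := by
  unfold lindahlPrices13; split_ifs <;> norm_num

theorem sum_lindahlPrices13_le (c : Fin 3) : ∑ i, lindahlPrices13 i c ≤ 5 / 2 := by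
  fin_cases c <;> simp [lindahlPrices13, Fin.sum_univ_five] <;> norm_num

theorem P13_improving_set (i : Fin 5) (T : Finset (Fin 3))
    (h : #(P13 i ∩ {0, 1}) < #(P13 i ∩ T)) : i ≠ 0 ∧ {1, 2} ⊆ T := by
  revert i T; decide

theorem one_lt_sum_lindahlPrices13 (i : Fin 5) (T : Finset (Fin 3))
    (h : #(P13 i ∩ {0, 1}) < #(P13 i ∩ T)) : 1 < ∑ c ∈ T, lindahlPrices13 i c := by
  obtain ⟨hi, hT⟩ := P13_improving_set i T h
  calc (1 : ℚ) < ∑ c ∈ {1, 2}, lindahlPrices13 i c := by simp [lindahlPrices13, hi]; norm_num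
    _ ≤ ∑ c ∈ T, lindahlPrices13 i c :=
      sum_le_sum_of_subset_of_nonneg hT fun c _ _ => lindahlPrices13_nonneg i c

/-- the committee `W = {a, b}` (for `k = 2`) is Lindahl priceable
but not priceable in the sense of Peters–Skowron. -/
theorem stmt13 :
    (∃ p : Fin 5 → Fin 3 → ℚ,
      (∀ i c, 0 ≤ p i c) ∧
      (∀ c, (∑ i, p i c) ≤ (5 : ℚ) / 2) ∧
      (∀ (i : Fin 5) (T : Finset (Fin 3)),
        (P13 i ∩ ({0, 1} : Finset (Fin 3))).card < (P13 i ∩ T).card →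
          1 < ∑ c ∈ T, p i c)) ∧
    ¬ (∃ (r : ℚ) (f : Fin 5 → Fin 3 → ℚ), 0 < r ∧
      (∀ i c, 0 ≤ f i c ∧ f i c ≤ 1) ∧
      (∀ i c, 0 < f i c → c ∈ P13 i) ∧
      (∀ i, (∑ c, f i c) ≤ 1) ∧
      (∀ c ∈ ({0, 1} : Finset (Fin 3)), (∑ i, f i c) = r) ∧
      (∀ c ∉ ({0, 1} : Finset (Fin 3)), (∑ i, f i c) = 0) ∧
      (∀ c ∉ ({0, 1} : Finset (Fin 3)),
        (∑ i ∈ Finset.univ.filter (fun i => c ∈ P13 i),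
          (1 - ∑ c' ∈ ({0, 1} : Finset (Fin 3)), f i c')) ≤ r)) := by
  refine ⟨⟨lindahlPrices13, lindahlPrices13_nonneg, sum_lindahlPrices13_le,
    one_lt_sum_lindahlPrices13⟩, ?_⟩
  rintro ⟨r, f, -, hbounds, hsupp, -, hprice, -, hleftover⟩
  have hr_le : r ≤ 1 := by
    have := sum_payments_le_card_supporters P13 f 0 (fun i => (hbounds i 0).1)
      (fun i => (hbounds i 0).2) (fun i => hsupp i 0)
    rwa [hprice 0 (by decide), show #(univ.filter fun i => (0 : Fin 3) ∈ P13 i) = 1 by decide,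
      Nat.cast_one] at this
  have hr_ge : 4 - 2 * r ≤ r := by
    have := card_sub_card_mul_le_sum_leftover f {0, 1} r (fun i c => (hbounds i c).1) hprice
      (univ.filter fun i => (2 : Fin 3) ∈ P13 i)
    rw [show #(univ.filter fun i => (2 : Fin 3) ∈ P13 i) = 4 by decide,
      show #({0, 1} : Finset (Fin 3)) = 2 by decide] at this
    exact_mod_cast this.trans (hleftover 2 (by decide))
  linarith
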